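/- Suppose I is an open interval of real numbers, V is a subgroup of Homeo⁺(I) acting freely on I, S is a nonempty set, and F : I → S is invariant with respect to some non-identity member of V. Then for any φ ∈ V: if F is past φ-invariant (there is some t ∈ I such that F(φ(x)) = F(x) for all x ∈ I with x < t), then F is fully φ-invariant (F ∘ φ = F on I). -/

import Mathlib

/-! By Hölder's theorem `V` is commutative: ordering its elements by their value at one point makes
`V` a bi-ordered group (freeness and connectedness of `I` make the comparison independent of the
point), and it is archimedean because the orbit of a point under an increasing homeomorphism without
fixed points is unbounded. Given `x`, some power `χ` of the nontrivial symmetry `ψ` of `F` moves `x`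
below `t`, and as `χ` commutes with `φ`,
`F (φ x) = F (χ (φ x)) = F (φ (χ x)) = F (χ x) = F x`. -/

open Function

section HolderTheorem

theorem exists_pow_le_and_lt_pow_succ {M : Type*} [Monoid M] [LinearOrder M]
    (harch : ∀ a b : M, 1 < a → ∃ n : ℕ, b < a ^ n) {a g : M} (ha : 1 < a) (hg : 1 ≤ g) :
    ∃ n : ℕ, a ^ n ≤ g ∧ g < a ^ (n + 1) := by
  classical
  have hex : ∃ n : ℕ, g < a ^ n := harch a g ha
  obtain ⟨n, hn⟩ : ∃ n, Nat.find hex = n + 1 := Nat.exists_eq_add_one.mpr <| by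
    by_contra! h0
    have := Nat.find_spec hex
    rw [Nat.le_zero.mp h0, pow_zero] at this
    exact this.not_ge hg
  exact ⟨n, not_lt.mp (Nat.find_min hex (by omega)), hn ▸ Nat.find_spec hex⟩

variable {G : Type*} [Group G] [LinearOrder G] [MulLeftMono G]

theorem eq_pow_of_isLeast (harch : ∀ a b : G, 1 < a → ∃ n : ℕ, b < a ^ n)
    {a g : G} (ha : IsLeast {x | 1 < x} a) (hg : 1 ≤ g) : ∃ n : ℕ, g = a ^ n := by
  obtain ⟨n, hle, hlt⟩ := exists_pow_le_and_lt_pow_succ harch ha.1 hg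
  refine ⟨n, (hle.eq_or_lt.resolve_right fun hlt' => ?_).symm⟩
  have hr : (a ^ n)⁻¹ * g < a := inv_mul_lt_iff_lt_mul.mpr (pow_succ a n ▸ hlt)
  exact hr.not_ge (ha.2 (lt_inv_mul_iff_lt.mpr hlt'))

variable [MulRightMono G]

theorem exists_one_lt_sq_le (hdense : ∀ a : G, 1 < a → ∃ b, 1 < b ∧ b < a)
    {ε : G} (hε : 1 < ε) : ∃ δ, 1 < δ ∧ δ ^ 2 ≤ ε := by
  obtain ⟨b, hb, hbε⟩ := hdense ε hε
  refine ⟨min b (b⁻¹ * ε), lt_min hb (lt_inv_mul_iff_lt.mpr hbε), ?_⟩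
  calc min b (b⁻¹ * ε) ^ 2 = min b (b⁻¹ * ε) * min b (b⁻¹ * ε) := sq _
    _ ≤ b * (b⁻¹ * ε) := mul_le_mul' (min_le_left _ _) (min_le_right _ _)
    _ = ε := mul_inv_cancel_left b ε

theorem mul_lt_mul_mul_sq (harch : ∀ a b : G, 1 < a → ∃ n : ℕ, b < a ^ n)
    {g h δ : G} (hg : 1 ≤ g) (hh : 1 ≤ h) (hδ : 1 < δ) : g * h < h * g * δ ^ 2 := by
  obtain ⟨m, hmg, hgm⟩ := exists_pow_le_and_lt_pow_succ harch hδ hg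
  obtain ⟨n, hnh, hhn⟩ := exists_pow_le_and_lt_pow_succ harch hδ hh
  calc g * h < δ ^ (m + 1) * δ ^ (n + 1) := Left.mul_lt_mul hgm hhn
    _ = δ ^ n * δ ^ m * δ ^ 2 := by rw [← pow_add, ← pow_add, ← pow_add]; ring_nf
    _ ≤ h * g * δ ^ 2 := mul_le_mul_left (mul_le_mul' hnh hmg) _

theorem commute_of_forall_exists_between (harch : ∀ a b : G, 1 < a → ∃ n : ℕ, b < a ^ n)
    (hdense : ∀ a : G, 1 < a → ∃ b, 1 < b ∧ b < a) {g h : G} (hg : 1 ≤ g) (hh : 1 ≤ h) :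
    Commute g h := by
  wlog hlt : h * g < g * h generalizing g h
  · rcases (not_lt.mp hlt).lt_or_eq with hlt | heq
    · exact (this hh hg hlt).symm
    · exact heq
  obtain ⟨δ, hδ, hδε⟩ := exists_one_lt_sq_le hdense (lt_inv_mul_iff_lt.mpr hlt)
  have hle : h * g * δ ^ 2 ≤ g * h :=
    (mul_le_mul_right hδε _).trans_eq (mul_inv_cancel_left _ _)
  exact absurd ((mul_lt_mul_mul_sq harch hg hh hδ).trans_le hle) (lt_irrefl _)

theorem commute_of_archimedean (harch : ∀ a b : G, 1 < a → ∃ n : ℕ, b < a ^ n) (g h : G) :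
    Commute g h := by
  wlog hg : 1 ≤ g generalizing g
  · exact Commute.inv_left_iff.mp (this g⁻¹ (Left.one_le_inv_iff.mpr (not_le.mp hg).le))
  wlog hh : 1 ≤ h generalizing h
  · exact Commute.inv_right_iff.mp (this h⁻¹ (Left.one_le_inv_iff.mpr (not_le.mp hh).le))
  by_cases hmin : ∃ a, IsLeast {x : G | 1 < x} a
  · obtain ⟨a, ha⟩ := hmin
    obtain ⟨m, rfl⟩ := eq_pow_of_isLeast harch ha hg
    obtain ⟨n, rfl⟩ := eq_pow_of_isLeast harch ha hh
    exact Commute.pow_pow_self a m n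
  · refine commute_of_forall_exists_between harch (fun a ha => ?_) hg hh
    by_contra! H
    exact hmin ⟨a, ha, fun b hb => H b hb⟩

end HolderTheorem

theorem StrictMono.forall_apply_lt_or_forall_lt_apply {α : Type*} [LinearOrder α]
    [DenselyOrdered α] [TopologicalSpace α] [OrderTopology α] [PreconnectedSpace α]
    {f : α → α} (hf : StrictMono f) (hsurj : Surjective f) (hfix : ∀ x, f x ≠ x) :
    (∀ x, f x < x) ∨ ∀ x, x < f x := by
  by_contra! h
  obtain ⟨⟨a, ha⟩, b, hb⟩ := h
  obtain ⟨x, hx⟩ :=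
    intermediate_value_univ₂ continuous_id (hf.monotone.continuous_of_surjective hsurj) ha hb
  exact hfix x hx.symm

theorem StrictMono.exists_lt_iterate {α : Type*} [ConditionallyCompleteLinearOrder α]
    {f : α → α} (hf : StrictMono f) (hsurj : Surjective f) (hlt : ∀ x, x < f x) (x M : α) :
    ∃ n, M < f^[n] x := by
  by_contra! hbdd
  have hB : BddAbove (Set.range fun n => f^[n] x) := ⟨M, Set.forall_mem_range.2 hbdd⟩
  obtain ⟨y, hy⟩ := hsurj (⨆ n, f^[n] x)
  obtain ⟨n, hn⟩ := exists_lt_of_lt_ciSup (hy ▸ hlt y)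
  have hsucc := hf hn
  rw [hy, ← iterate_succ_apply' f n x] at hsucc
  exact (le_ciSup hB (n + 1)).not_gt hsucc

section FreeAction

variable {α : Type*} {V : Subgroup (Equiv.Perm α)}

theorem eq_of_apply_eq_of_free (hfree : ∀ ψ ∈ V, ψ ≠ 1 → ∀ x, ψ x ≠ x)
    {g h : Equiv.Perm α} (hg : g ∈ V) (hh : h ∈ V) {x : α} (hx : g x = h x) : g = h := by
  by_contra hne
  refine hfree (h⁻¹ * g) (mul_mem (inv_mem hh) hg) (fun h1 => hne ?_) x ?_
  · exact (inv_mul_eq_one.mp h1).symm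
  · rw [Equiv.Perm.mul_apply, hx, Equiv.Perm.coe_inv, Equiv.symm_apply_apply]

variable [ConditionallyCompleteLinearOrder α] [DenselyOrdered α] [TopologicalSpace α]
  [OrderTopology α]

theorem lt_of_apply_lt_of_free (hmono : ∀ ψ ∈ V, StrictMono ψ)
    (hfree : ∀ ψ ∈ V, ψ ≠ 1 → ∀ x, ψ x ≠ x) {g h : Equiv.Perm α} (hg : g ∈ V) (hh : h ∈ V)
    {x : α} (hx : g x < h x) (y : α) : g y < h y := by
  have hV : h⁻¹ * g ∈ V := mul_mem (inv_mem hh) hg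
  have hne : h⁻¹ * g ≠ 1 := fun h1 => hx.ne (by rw [(inv_mul_eq_one.mp h1)])
  have hlt_iff : ∀ z, (h⁻¹ * g) z < z ↔ g z < h z := fun z => by
    rw [Equiv.Perm.mul_apply, ← (hmono h hh).lt_iff_lt, Equiv.Perm.coe_inv,
      Equiv.apply_symm_apply]
  rcases (hmono _ hV).forall_apply_lt_or_forall_lt_apply (Equiv.surjective _)
      (hfree _ hV hne) with hdown | hup
  · exact (hlt_iff y).mp (hdown y)
  · exact absurd (hup x) ((hlt_iff x).mpr hx).not_gt

theorem le_of_apply_le_of_free (hmono : ∀ ψ ∈ V, StrictMono ψ)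
    (hfree : ∀ ψ ∈ V, ψ ≠ 1 → ∀ x, ψ x ≠ x) {g h : Equiv.Perm α} (hg : g ∈ V) (hh : h ∈ V)
    {x : α} (hx : g x ≤ h x) (y : α) : g y ≤ h y := by
  rcases hx.eq_or_lt with heq | hlt
  · rw [eq_of_apply_eq_of_free hfree hg hh heq]
  · exact (lt_of_apply_lt_of_free hmono hfree hg hh hlt y).le

theorem commute_of_free (hmono : ∀ ψ ∈ V, StrictMono ψ)
    (hfree : ∀ ψ ∈ V, ψ ≠ 1 → ∀ x, ψ x ≠ x) [Nonempty α] {g h : Equiv.Perm α} (hg : g ∈ V)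
    (hh : h ∈ V) : Commute g h := by
  obtain ⟨x₀⟩ := ‹Nonempty α›
  let _ : LinearOrder V := LinearOrder.lift' (fun g : V => (g : Equiv.Perm α) x₀)
    fun a b hab => Subtype.ext (eq_of_apply_eq_of_free hfree a.2 b.2 hab)
  have : MulLeftMono V := ⟨fun a _ _ hbc => (hmono a a.2).monotone hbc⟩
  have : MulRightMono V :=
    ⟨fun a b c hbc => le_of_apply_le_of_free hmono hfree b.2 c.2 hbc ((a : Equiv.Perm α) x₀)⟩
  have harch : ∀ a b : V, 1 < a → ∃ n : ℕ, b < a ^ n := fun a b ha => by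
    have hup : ∀ y, y < (a : Equiv.Perm α) y :=
      lt_of_apply_lt_of_free hmono hfree (one_mem V) a.2 ha
    exact (hmono a a.2).exists_lt_iterate (Equiv.surjective _) hup x₀ ((b : Equiv.Perm α) x₀)
  exact (commute_of_archimedean harch ⟨g, hg⟩ ⟨h, hh⟩).map V.subtype

theorem exists_zpow_apply_lt_of_free (hmono : ∀ ψ ∈ V, StrictMono ψ)
    (hfree : ∀ ψ ∈ V, ψ ≠ 1 → ∀ x, ψ x ≠ x) {ψ : Equiv.Perm α} (hψ : ψ ∈ V) (hψ1 : ψ ≠ 1)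
    (x t : α) : ∃ n : ℤ, (ψ ^ n) x < t := by
  wlog hup : ∀ y, y < ψ y generalizing ψ
  · have hdown : ∀ y, ψ y < y :=
      ((hmono ψ hψ).forall_apply_lt_or_forall_lt_apply (Equiv.surjective _)
        (hfree ψ hψ hψ1)).resolve_right hup
    obtain ⟨n, hn⟩ := this (inv_mem hψ) (inv_ne_one.mpr hψ1) fun y => by
      simpa using hdown (ψ⁻¹ y)
    exact ⟨-n, by simpa [zpow_neg, inv_zpow'] using hn⟩
  obtain ⟨n, hn⟩ := (hmono ψ hψ).exists_lt_iterate (Equiv.surjective _) hup t x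
  refine ⟨-n, ?_⟩
  rw [← (hmono _ (zpow_mem hψ n)).lt_iff_lt, zpow_neg, Equiv.Perm.coe_inv,
    Equiv.apply_symm_apply]
  simpa [Equiv.Perm.iterate_eq_pow] using hn

end FreeAction

def invariantPerms {α S : Type*} (F : α → S) : Subgroup (Equiv.Perm α) where
  carrier := {g | ∀ x, F (g x) = F x}
  mul_mem' {g h} hg hh x := (hg (h x)).trans (hh x)
  one_mem' _ := rfl
  inv_mem' {g} hg x := by simpa using (hg (g⁻¹ x)).symm

theorem stmt_10_general (I : Set ℝ) (hIconn : I.OrdConnected)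
    (V : Subgroup (Equiv.Perm I))
    (hmono : ∀ ψ ∈ V, StrictMono (⇑ψ))
    (hfree : ∀ ψ ∈ V, ψ ≠ 1 → ∀ x : I, ψ x ≠ x)
    (S : Type*) (F : I → S)
    (hinvsome : ∃ ψ ∈ V, ψ ≠ 1 ∧ ∀ x : I, F (ψ x) = F x)
    (φ : Equiv.Perm I) (hφ : φ ∈ V)
    (hpast : ∃ t : I, ∀ x : I, x < t → F (φ x) = F x) :
    ∀ x : I, F (φ x) = F x := by
  obtain ⟨ψ, hψV, hψ1, hψF⟩ := hinvsome
  obtain ⟨t, ht⟩ := hpast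
  have : I.OrdConnected := hIconn
  have : Inhabited I := ⟨t⟩
  intro x
  obtain ⟨n, hn⟩ := exists_zpow_apply_lt_of_free hmono hfree hψV hψ1 x t
  have hF : ∀ y, F ((ψ ^ n) y) = F y := zpow_mem (show ψ ∈ invariantPerms F from hψF) n
  have hcomm : Commute φ (ψ ^ n) := commute_of_free hmono hfree hφ (zpow_mem hψV n)
  calc F (φ x) = F ((ψ ^ n) (φ x)) := (hF _).symm
    _ = F (φ ((ψ ^ n) x)) := by rw [← Equiv.Perm.mul_apply, ← hcomm.eq, Equiv.Perm.mul_apply]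
    _ = F ((ψ ^ n) x) := ht _ hn
    _ = F x := hF x

/-- If `I` is an open interval of reals (open, order-connected, nonempty subset of `ℝ`),
`V ≤ Homeo⁺(I)` acts freely on `I` (modelled as a subgroup of `Equiv.Perm I` of strictly
monotone permutations with no non-identity element having a fixed point), `S` is a nonempty
set, and `F : I → S` is invariant with respect to some non-identity member of `V`, then for
any `φ ∈ V`: if `F` is past `φ`-invariant (`φ`-invariant before some `t ∈ I`), then `F` is
fully `φ`-invariant. -/
theorem stmt_10 (I : Set ℝ) (hIopen : IsOpen I) (hIconn : I.OrdConnected) (hIne : I.Nonempty)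
    (V : Subgroup (Equiv.Perm I))
    (hmono : ∀ ψ ∈ V, StrictMono (⇑ψ))
    (hfree : ∀ ψ ∈ V, ψ ≠ 1 → ∀ x : I, ψ x ≠ x)
    (S : Type*) [Nonempty S] (F : I → S)
    (hinvsome : ∃ ψ ∈ V, ψ ≠ 1 ∧ ∀ x : I, F (ψ x) = F x)
    (φ : Equiv.Perm I) (hφ : φ ∈ V)
    (hpast : ∃ t : I, ∀ x : I, x < t → F (φ x) = F x) :
    ∀ x : I, F (φ x) = F x :=
  stmt_10_general I hIconn V hmono hfree S F hinvsome φ hφ hpast
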